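/- Let Π_±(ξ) := Π¹_±(ξ) denote the mass-one projection symbols, and for a sign s ∈ {+1,−1} write Π_s := Π_+ if s = +1 and Π_s := Π_− if s = −1. For every C₀ > 0 there exists C > 0 such that: for all signs s₁, s₂ ∈ {+1,−1}, all integers k₁, k₂ ≥ 0 and l with 1 ≤ l ≤ min(k₁,k₂) + 10, all unit vectors ω₁, ω₂ ∈ ℝ³ with |s₁ω₁ − s₂ω₂| ≤ C₀ 2^{−l}, and all vectors v₁, v₂ ∈ ℂ⁴, one has |⟨Π_{s₁}(2^{k₁}ω₁) v₁, β Π_{s₂}(2^{k₂}ω₂) v₂⟩_{ℂ⁴}| ≤ C 2^{−l} |v₁| |v₂|, where ⟨·,·⟩_{ℂ⁴} is the standard Hermitian inner product on ℂ⁴ and |·| the associated norm. -/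

import Mathlib

noncomputable section

open Matrix Complex

/-- The four Dirac matrices `γ⁰, γ¹, γ², γ³` (in 2×2 block form
`γ⁰ = [[I₂,0],[0,−I₂]]`, `γʲ = [[0,σʲ],[−σʲ,0]]` with the Pauli matrices `σʲ`). -/
def diracGamma : Fin 4 → Matrix (Fin 4) (Fin 4) ℂ :=
  ![!![1, 0, 0, 0; 0, 1, 0, 0; 0, 0, -1, 0; 0, 0, 0, -1],
    !![0, 0, 0, 1; 0, 0, 1, 0; 0, -1, 0, 0; -1, 0, 0, 0],
    !![0, 0, 0, -I; 0, 0, I, 0; 0, I, 0, 0; -I, 0, 0, 0],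
    !![0, 0, 1, 0; 0, 0, 0, -1; -1, 0, 0, 0; 0, 1, 0, 0]]

/-- `β := γ⁰`. -/
def diracBeta : Matrix (Fin 4) (Fin 4) ℂ := diracGamma 0

/-- `αʲ := γ⁰ γʲ` for `j = 1,2,3` (indexed by `j : Fin 3`, so `diracAlpha j = γ⁰ γ^(j+1)`). -/
def diracAlpha (j : Fin 3) : Matrix (Fin 4) (Fin 4) ℂ := diracGamma 0 * diracGamma j.succ

/-- `ξ·α := ξ₁α¹ + ξ₂α² + ξ₃α³` for `ξ ∈ ℝ³`. -/
def xiDotAlpha (ξ : EuclideanSpace ℝ (Fin 3)) : Matrix (Fin 4) (Fin 4) ℂ :=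
  ∑ j : Fin 3, (ξ j : ℂ) • diracAlpha j

/-- The Japanese bracket `⟨ξ⟩_M := √(|ξ|² + M²)`. -/
def jbracket (M : ℝ) (ξ : EuclideanSpace ℝ (Fin 3)) : ℝ :=
  Real.sqrt (‖ξ‖ ^ 2 + M ^ 2)

/-- The projection symbols `Π^M_s(ξ) := ½[I₄ + s ⟨ξ⟩_M^{−1}(ξ·α + Mβ)]` for a sign `s = ±1`. -/
def projSymbol (M s : ℝ) (ξ : EuclideanSpace ℝ (Fin 3)) : Matrix (Fin 4) (Fin 4) ℂ :=
  (2⁻¹ : ℂ) • ((1 : Matrix (Fin 4) (Fin 4) ℂ) +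
    ((s * (jbracket M ξ)⁻¹ : ℝ) : ℂ) • (xiDotAlpha ξ + (M : ℂ) • diracBeta))


/-- The standard Hermitian inner product on `ℂ⁴` (conjugate-linear in the first slot). -/
def hermInner (a b : Fin 4 → ℂ) : ℂ := ∑ i, (starRingEnd ℂ) (a i) * b i

/-- The norm on `ℂ⁴` associated to the standard Hermitian inner product. -/
def hermNorm (a : Fin 4 → ℂ) : ℝ := Real.sqrt (∑ i, ‖a i‖ ^ 2)

/-!
At frequency `2^k ω` the mass-one projection `Π_s` differs from the massless projection
`½(1 + s ω·α)` by `O(2^{-k})` in operator norm, and `‖Π_s‖ ≤ 1` since `ξ·α + β` is Hermitian with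
square `⟨ξ⟩²`. For the massless projections, with `a = s₁ω₁` and `b = s₂ω₂`, the relations
`β(b·α) = −(b·α)β` and `(1 + a·α)(a·α) = 1 + a·α` (as `(a·α)² = |a|² = 1`) give the null identity
`(1 + a·α) β (1 + b·α) = (1 + a·α)((a − b)·α) β`, whose norm is at most `2|a − b|`.
-/

lemma xiDotAlpha_eq (ξ : EuclideanSpace ℝ (Fin 3)) :
    xiDotAlpha ξ = !![0, 0, (ξ 2 : ℂ), ξ 0 - ξ 1 * I;
                      0, 0, ξ 0 + ξ 1 * I, -ξ 2;
                      ξ 2, ξ 0 - ξ 1 * I, 0, 0;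
                      ξ 0 + ξ 1 * I, -ξ 2, 0, 0] := by
  ext i j
  simp only [xiDotAlpha, diracAlpha, diracGamma, Fin.sum_univ_three]
  fin_cases i <;> fin_cases j <;> simp <;> ring

lemma diracBeta_eq : diracBeta = !![1, 0, 0, 0; 0, 1, 0, 0; 0, 0, -1, 0; 0, 0, 0, -1] := rfl

lemma xiDotAlpha_smul (r : ℝ) (ξ : EuclideanSpace ℝ (Fin 3)) :
    xiDotAlpha (r • ξ) = (r : ℂ) • xiDotAlpha ξ := by
  simp only [xiDotAlpha, Finset.smul_sum, smul_smul, PiLp.smul_apply, smul_eq_mul, ofReal_mul]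

lemma xiDotAlpha_sub (ξ η : EuclideanSpace ℝ (Fin 3)) :
    xiDotAlpha (ξ - η) = xiDotAlpha ξ - xiDotAlpha η := by
  simp [xiDotAlpha, sub_smul, Finset.sum_sub_distrib]

lemma xiDotAlpha_zero : xiDotAlpha 0 = 0 := by
  simp [xiDotAlpha]

lemma xiDotAlpha_conjTranspose (ξ : EuclideanSpace ℝ (Fin 3)) :
    (xiDotAlpha ξ)ᴴ = xiDotAlpha ξ := by
  rw [xiDotAlpha_eq]
  ext i j; fin_cases i <;> fin_cases j <;> simp <;> ring

lemma diracBeta_conjTranspose : diracBetaᴴ = diracBeta := by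
  rw [diracBeta_eq]
  ext i j; fin_cases i <;> fin_cases j <;> simp

lemma xiDotAlpha_mul_self (ξ : EuclideanSpace ℝ (Fin 3)) :
    xiDotAlpha ξ * xiDotAlpha ξ = ((‖ξ‖ ^ 2 : ℝ) : ℂ) • 1 := by
  have hξ : ((‖ξ‖ ^ 2 : ℝ) : ℂ) = (ξ 0 : ℂ) ^ 2 + (ξ 1 : ℂ) ^ 2 + (ξ 2 : ℂ) ^ 2 := by
    rw [EuclideanSpace.real_norm_sq_eq, Fin.sum_univ_three]; push_cast; ring
  rw [xiDotAlpha_eq, hξ]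
  ext i j; fin_cases i <;> fin_cases j <;>
    simp [Matrix.mul_apply, Fin.sum_univ_four] <;> ring_nf <;> simp [I_sq]

lemma diracBeta_mul_self : diracBeta * diracBeta = 1 := by
  rw [diracBeta_eq]
  ext i j; fin_cases i <;> fin_cases j <;> simp [Matrix.mul_apply, Fin.sum_univ_four]

lemma diracBeta_mul_xiDotAlpha (ξ : EuclideanSpace ℝ (Fin 3)) :
    diracBeta * xiDotAlpha ξ = -(xiDotAlpha ξ * diracBeta) := by
  rw [xiDotAlpha_eq, diracBeta_eq]
  ext i j; fin_cases i <;> fin_cases j <;> simp [Matrix.mul_apply, Fin.sum_univ_four]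

lemma diracSymbol_conjTranspose (M : ℝ) (ξ : EuclideanSpace ℝ (Fin 3)) :
    (xiDotAlpha ξ + (M : ℂ) • diracBeta)ᴴ = xiDotAlpha ξ + (M : ℂ) • diracBeta := by
  simp [conjTranspose_add, conjTranspose_smul, xiDotAlpha_conjTranspose, diracBeta_conjTranspose]

lemma diracSymbol_mul_self (M : ℝ) (ξ : EuclideanSpace ℝ (Fin 3)) :
    (xiDotAlpha ξ + (M : ℂ) • diracBeta) * (xiDotAlpha ξ + (M : ℂ) • diracBeta) =
      ((jbracket M ξ ^ 2 : ℝ) : ℂ) • 1 := by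
  have hanti := diracBeta_mul_xiDotAlpha ξ
  rw [jbracket, Real.sq_sqrt (by positivity), add_mul, mul_add, mul_add, xiDotAlpha_mul_self,
    mul_smul_comm, smul_mul_assoc, smul_mul_assoc, mul_smul_comm, diracBeta_mul_self, hanti]
  push_cast
  module

open scoped Matrix.Norms.L2Operator

lemma jbracket_nonneg (M : ℝ) (ξ : EuclideanSpace ℝ (Fin 3)) : 0 ≤ jbracket M ξ :=
  Real.sqrt_nonneg _

lemma norm_diracSymbol (M : ℝ) (ξ : EuclideanSpace ℝ (Fin 3)) :
    ‖xiDotAlpha ξ + (M : ℂ) • diracBeta‖ = jbracket M ξ := by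
  have hsq := l2_opNorm_conjTranspose_mul_self (xiDotAlpha ξ + (M : ℂ) • diracBeta)
  rw [diracSymbol_conjTranspose, diracSymbol_mul_self, norm_smul, CStarRing.norm_one, mul_one,
    norm_real, Real.norm_of_nonneg (by positivity)] at hsq
  nlinarith [norm_nonneg (xiDotAlpha ξ + (M : ℂ) • diracBeta), jbracket_nonneg M ξ]

lemma norm_xiDotAlpha (ξ : EuclideanSpace ℝ (Fin 3)) : ‖xiDotAlpha ξ‖ = ‖ξ‖ := by
  simpa [jbracket] using norm_diracSymbol 0 ξ

lemma norm_diracBeta : ‖diracBeta‖ = 1 := by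
  simpa [jbracket, xiDotAlpha_zero] using norm_diracSymbol 1 0

lemma projSymbol_conjTranspose (M s : ℝ) (ξ : EuclideanSpace ℝ (Fin 3)) :
    (projSymbol M s ξ)ᴴ = projSymbol M s ξ := by
  rw [projSymbol, conjTranspose_smul, conjTranspose_add, conjTranspose_one, conjTranspose_smul,
    diracSymbol_conjTranspose]
  simp [conj_ofReal]

lemma norm_projSymbol_le_one {s : ℝ} (hs : |s| ≤ 1) (M : ℝ) (ξ : EuclideanSpace ℝ (Fin 3)) :
    ‖projSymbol M s ξ‖ ≤ 1 := by
  have hJ := jbracket_nonneg M ξ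
  have hD : ‖((s * (jbracket M ξ)⁻¹ : ℝ) : ℂ) • (xiDotAlpha ξ + (M : ℂ) • diracBeta)‖ ≤ 1 := by
    rw [norm_smul, norm_diracSymbol, norm_real, Real.norm_eq_abs, abs_mul,
      abs_of_nonneg (inv_nonneg.2 hJ), mul_assoc]
    exact mul_le_one₀ hs (by positivity) (inv_mul_le_one_of_le₀ le_rfl hJ)
  calc ‖projSymbol M s ξ‖
      ≤ ‖(2⁻¹ : ℂ)‖ * (‖(1 : Matrix (Fin 4) (Fin 4) ℂ)‖ + 1) := by
        rw [projSymbol, norm_smul]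
        gcongr
        exact (norm_add_le _ _).trans (by gcongr)
    _ = 1 := by rw [CStarRing.norm_one]; norm_num

lemma projSymbol_zero_of_norm_eq_one (s : ℝ) {ω : EuclideanSpace ℝ (Fin 3)} (hω : ‖ω‖ = 1) :
    projSymbol 0 s ω = (2⁻¹ : ℂ) • (1 + xiDotAlpha (s • ω)) := by
  simp [projSymbol, jbracket, hω, xiDotAlpha_smul]

lemma norm_projSymbol_smul_sub_le {s M r : ℝ} (hs : |s| ≤ 1) (hM : 0 ≤ M) (hr : 0 < r)
    {ω : EuclideanSpace ℝ (Fin 3)} (hω : ‖ω‖ = 1) :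
    ‖projSymbol M s (r • ω) - projSymbol 0 s ω‖ ≤ M / r := by
  set J := jbracket M (r • ω)
  have hJ : J = Real.sqrt (r ^ 2 + M ^ 2) := by
    simp [J, jbracket, norm_smul, hω, abs_of_pos hr]
  have hrJ : r ≤ J := hJ ▸ Real.le_sqrt_of_sq_le (by nlinarith)
  have hJrM : J ≤ r + M := hJ ▸ Real.sqrt_le_iff.2 ⟨by positivity, by nlinarith⟩
  have hJ0 : 0 < J := hr.trans_le hrJ
  have hdiff : projSymbol M s (r • ω) - projSymbol 0 s ω =
      (2⁻¹ : ℂ) • (((s * (r / J - 1) : ℝ) : ℂ) • xiDotAlpha ω +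
        ((s * (M / J) : ℝ) : ℂ) • diracBeta) := by
    rw [projSymbol, projSymbol_zero_of_norm_eq_one s hω, xiDotAlpha_smul, xiDotAlpha_smul]
    push_cast
    module
  have hcoef : |r / J - 1| ≤ M / J := by
    rw [div_sub_one hJ0.ne', abs_div, abs_of_pos hJ0, abs_of_nonpos (by linarith)]
    gcongr
    linarith
  have hMJ : M / J ≤ M / r := div_le_div_of_nonneg_left hM hr hrJ
  calc ‖projSymbol M s (r • ω) - projSymbol 0 s ω‖
      ≤ 2⁻¹ * (|s * (r / J - 1)| * ‖ω‖ + |s * (M / J)| * 1) := by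
        rw [hdiff, norm_smul, norm_inv, RCLike.norm_ofNat]
        gcongr
        refine (norm_add_le _ _).trans_eq ?_
        rw [norm_smul, norm_smul, norm_real, norm_real, norm_xiDotAlpha, norm_diracBeta,
          Real.norm_eq_abs, Real.norm_eq_abs]
    _ ≤ M / r := by
        rw [hω, abs_mul, abs_mul, abs_of_nonneg (show 0 ≤ M / J by positivity)]
        nlinarith [abs_nonneg s, abs_nonneg (r / J - 1)]

lemma one_add_xiDotAlpha_mul_diracBeta_mul {a : EuclideanSpace ℝ (Fin 3)} (ha : ‖a‖ = 1)
    (b : EuclideanSpace ℝ (Fin 3)) :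
    (1 + xiDotAlpha a) * (diracBeta * (1 + xiDotAlpha b)) =
      (1 + xiDotAlpha a) * (xiDotAlpha (a - b) * diracBeta) := by
  have haa : (1 + xiDotAlpha a) * xiDotAlpha a = 1 + xiDotAlpha a := by
    rw [add_mul, one_mul, xiDotAlpha_mul_self, ha]
    simp [add_comm]
  calc (1 + xiDotAlpha a) * (diracBeta * (1 + xiDotAlpha b))
      = (1 + xiDotAlpha a) * (diracBeta - xiDotAlpha b * diracBeta) := by
        rw [mul_add, mul_one, diracBeta_mul_xiDotAlpha, ← sub_eq_add_neg]
    _ = (1 + xiDotAlpha a) * xiDotAlpha a * diracBeta -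
          (1 + xiDotAlpha a) * (xiDotAlpha b * diracBeta) := by
        rw [haa, mul_sub]
    _ = (1 + xiDotAlpha a) * (xiDotAlpha (a - b) * diracBeta) := by
        rw [xiDotAlpha_sub]
        noncomm_ring

lemma norm_projSymbol_zero_mul_diracBeta_mul_le {s₁ : ℝ} (hs₁ : |s₁| = 1) (s₂ : ℝ)
    {ω₁ ω₂ : EuclideanSpace ℝ (Fin 3)} (hω₁ : ‖ω₁‖ = 1) (hω₂ : ‖ω₂‖ = 1) :
    ‖projSymbol 0 s₁ ω₁ * (diracBeta * projSymbol 0 s₂ ω₂)‖ ≤ ‖s₁ • ω₁ - s₂ • ω₂‖ / 2 := by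
  set a := s₁ • ω₁
  set b := s₂ • ω₂
  have ha : ‖a‖ = 1 := by rw [norm_smul, Real.norm_eq_abs, hs₁, hω₁, one_mul]
  have hprod : projSymbol 0 s₁ ω₁ * (diracBeta * projSymbol 0 s₂ ω₂) =
      (4⁻¹ : ℂ) • ((1 + xiDotAlpha a) * (xiDotAlpha (a - b) * diracBeta)) := by
    rw [projSymbol_zero_of_norm_eq_one s₁ hω₁, projSymbol_zero_of_norm_eq_one s₂ hω₂,
      mul_smul_comm, smul_mul_assoc, mul_smul_comm, smul_smul,
      one_add_xiDotAlpha_mul_diracBeta_mul ha]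
    norm_num [b]
  have hone : ‖1 + xiDotAlpha a‖ ≤ 2 := by
    refine (norm_add_le _ _).trans ?_
    rw [CStarRing.norm_one, norm_xiDotAlpha, ha]
    norm_num
  calc ‖projSymbol 0 s₁ ω₁ * (diracBeta * projSymbol 0 s₂ ω₂)‖
      ≤ 4⁻¹ * (‖1 + xiDotAlpha a‖ * (‖xiDotAlpha (a - b)‖ * ‖diracBeta‖)) := by
        rw [hprod, norm_smul, norm_inv, RCLike.norm_ofNat]
        gcongr
        exact (norm_mul_le _ _).trans (by gcongr; exact norm_mul_le _ _)
    _ ≤ ‖a - b‖ / 2 := by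
        rw [norm_xiDotAlpha, norm_diracBeta, mul_one]
        nlinarith [norm_nonneg (a - b)]

lemma norm_mul_diracBeta_mul_le (A B : Matrix (Fin 4) (Fin 4) ℂ) :
    ‖A * (diracBeta * B)‖ ≤ ‖A‖ * ‖B‖ :=
  (norm_mul_le _ _).trans <| by
    gcongr
    exact (norm_mul_le _ _).trans_eq (by rw [norm_diracBeta, one_mul])

lemma norm_projSymbol_mul_diracBeta_mul_le {M s₁ s₂ r₁ r₂ : ℝ} (hM : 0 ≤ M)
    (hs₁ : |s₁| = 1) (hs₂ : |s₂| = 1) (hr₁ : 0 < r₁) (hr₂ : 0 < r₂)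
    {ω₁ ω₂ : EuclideanSpace ℝ (Fin 3)} (hω₁ : ‖ω₁‖ = 1) (hω₂ : ‖ω₂‖ = 1) :
    ‖projSymbol M s₁ (r₁ • ω₁) * (diracBeta * projSymbol M s₂ (r₂ • ω₂))‖ ≤
      ‖s₁ • ω₁ - s₂ • ω₂‖ / 2 + M / r₁ + M / r₂ := by
  set P₁ := projSymbol M s₁ (r₁ • ω₁)
  set P₂ := projSymbol M s₂ (r₂ • ω₂)
  set Q₁ := projSymbol 0 s₁ ω₁
  set Q₂ := projSymbol 0 s₂ ω₂
  have hsplit : P₁ * (diracBeta * P₂) =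
      Q₁ * (diracBeta * Q₂) + (P₁ - Q₁) * (diracBeta * P₂) + Q₁ * (diracBeta * (P₂ - Q₂)) := by
    noncomm_ring
  have hP₂ : ‖P₂‖ ≤ 1 := norm_projSymbol_le_one hs₂.le M _
  have hQ₁ : ‖Q₁‖ ≤ 1 := norm_projSymbol_le_one hs₁.le 0 _
  have hE₁ : ‖P₁ - Q₁‖ ≤ M / r₁ := norm_projSymbol_smul_sub_le hs₁.le hM hr₁ hω₁
  have hE₂ : ‖P₂ - Q₂‖ ≤ M / r₂ := norm_projSymbol_smul_sub_le hs₂.le hM hr₂ hω₂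
  calc ‖P₁ * (diracBeta * P₂)‖
      ≤ ‖Q₁ * (diracBeta * Q₂)‖ + ‖P₁ - Q₁‖ * ‖P₂‖ + ‖Q₁‖ * ‖P₂ - Q₂‖ := by
        rw [hsplit]
        refine (norm_add₃_le ..).trans ?_
        gcongr <;> exact norm_mul_diracBeta_mul_le _ _
    _ ≤ ‖s₁ • ω₁ - s₂ • ω₂‖ / 2 + M / r₁ * 1 + 1 * (M / r₂) := by
        gcongr
        exact norm_projSymbol_zero_mul_diracBeta_mul_le hs₁ s₂ hω₁ hω₂
    _ = ‖s₁ • ω₁ - s₂ • ω₂‖ / 2 + M / r₁ + M / r₂ := by ring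

lemma hermInner_eq_inner (a b : Fin 4 → ℂ) :
    hermInner a b = inner ℂ (WithLp.toLp 2 a) (WithLp.toLp 2 b) := by
  simp [hermInner, PiLp.inner_apply, mul_comm]

lemma hermNorm_eq_norm (a : Fin 4 → ℂ) : hermNorm a = ‖WithLp.toLp 2 a‖ := by
  simp [hermNorm, EuclideanSpace.norm_eq]

lemma norm_hermInner_mulVec_le (A B : Matrix (Fin 4) (Fin 4) ℂ) (x y : Fin 4 → ℂ) :
    ‖hermInner (A *ᵥ x) (B *ᵥ y)‖ ≤ ‖Aᴴ * B‖ * hermNorm x * hermNorm y := by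
  have hmove : hermInner (A *ᵥ x) (B *ᵥ y) = hermInner x ((Aᴴ * B) *ᵥ y) := by
    have hdot (a b : Fin 4 → ℂ) : hermInner a b = star a ⬝ᵥ b := rfl
    rw [hdot, hdot, star_mulVec, ← mulVec_mulVec, ← dotProduct_mulVec]
  rw [hmove, hermInner_eq_inner, hermNorm_eq_norm, hermNorm_eq_norm, mul_assoc]
  refine (norm_inner_le_norm _ _).trans ?_
  rw [mul_left_comm]
  gcongr
  exact l2_opNorm_mulVec _ _

lemma one_div_two_pow_le {k l : ℕ} (h : (l : ℤ) ≤ k + 10) :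
    1 / (2 : ℝ) ^ k ≤ 2 ^ 10 * (2 : ℝ) ^ (-(l : ℤ)) := by
  rw [one_div, ← zpow_natCast, ← _root_.zpow_neg, ← zpow_natCast, ← zpow_add₀ two_ne_zero]
  exact zpow_le_zpow_right₀ one_le_two (by push_cast; omega)

/-- Null-structure bound for the mass-one projections `Π_s := Π¹_s`: if the unit directions
`ω₁, ω₂` satisfy `|s₁ω₁ − s₂ω₂| ≤ C₀2^{−l}` with `1 ≤ l ≤ min(k₁,k₂)+10`, then
`|⟨Π_{s₁}(2^{k₁}ω₁)v₁, β Π_{s₂}(2^{k₂}ω₂)v₂⟩| ≤ C 2^{−l}|v₁||v₂|`. -/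
theorem projSymbol_null_structure_bound (C₀ : ℝ) (hC₀ : 0 < C₀) :
    ∃ C > (0 : ℝ), ∀ s₁ s₂ : ℝ, (s₁ = 1 ∨ s₁ = -1) → (s₂ = 1 ∨ s₂ = -1) →
      ∀ k₁ k₂ l : ℕ, 1 ≤ l → (l : ℤ) ≤ min k₁ k₂ + 10 →
        ∀ ω₁ ω₂ : EuclideanSpace ℝ (Fin 3), ‖ω₁‖ = 1 → ‖ω₂‖ = 1 →
          ‖s₁ • ω₁ - s₂ • ω₂‖ ≤ C₀ * (2 : ℝ) ^ (-(l : ℤ)) →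
          ∀ v₁ v₂ : Fin 4 → ℂ,
            ‖hermInner ((projSymbol 1 s₁ (((2 : ℝ) ^ k₁) • ω₁)).mulVec v₁)
                (diracBeta.mulVec ((projSymbol 1 s₂ (((2 : ℝ) ^ k₂) • ω₂)).mulVec v₂))‖ ≤
              C * (2 : ℝ) ^ (-(l : ℤ)) * hermNorm v₁ * hermNorm v₂ := by
  refine ⟨C₀ / 2 + 2 ^ 11, by positivity, ?_⟩
  intro s₁ s₂ hs₁ hs₂ k₁ k₂ l _ hl ω₁ ω₂ hω₁ hω₂ hclose v₁ v₂
  have hk₁ : 1 / (2 : ℝ) ^ k₁ ≤ 2 ^ 10 * (2 : ℝ) ^ (-(l : ℤ)) :=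
    one_div_two_pow_le (by omega)
  have hk₂ : 1 / (2 : ℝ) ^ k₂ ≤ 2 ^ 10 * (2 : ℝ) ^ (-(l : ℤ)) :=
    one_div_two_pow_le (by omega)
  have hP := norm_projSymbol_mul_diracBeta_mul_le zero_le_one
    ((abs_eq zero_le_one).2 hs₁) ((abs_eq zero_le_one).2 hs₂)
    (pow_pos two_pos k₁) (pow_pos two_pos k₂) hω₁ hω₂
  rw [mulVec_mulVec]
  refine (norm_hermInner_mulVec_le _ _ _ _).trans ?_
  rw [projSymbol_conjTranspose]
  have hbound := hP.trans (show _ ≤ (C₀ / 2 + 2 ^ 11) * (2 : ℝ) ^ (-(l : ℤ)) by linarith)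
  exact mul_le_mul_of_nonneg_right (mul_le_mul_of_nonneg_right hbound (Real.sqrt_nonneg _))
    (Real.sqrt_nonneg _)
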